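/- Let T = {p ∈ ℝ³ : the maximum of ℓ₁(p),…,ℓ₅(p) is attained by at least two of the five functions}. Then T = σ₁ ∪ σ₂ ∪ σ₃ ∪ σ₄ ∪ σ₅ ∪ σ₆ ∪ σ₇ ∪ σ₈ ∪ σ₉; that is, the tropical hypersurface of the re-embedding polynomial z − (y − a₁x − a₂x² − a₃x³) consists exactly of the nine cells σ₁,…,σ₉ listed in the paper. -/

import Mathlib

/-- The five affine functions on `ℝ³` (coordinates `(X, Y, Z)`, encoded as `(p.1, p.2.1, p.2.2)`)
arising as the (max-convention) tropicalizations of the terms of the re-embedding polynomial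
`z − (y − a₁x − a₂x² − a₃x³)`, where `A = val a₁`, `B = val a₂`, `C = val a₃`:
`ℓ₁ = Z`, `ℓ₂ = Y`, `ℓ₃ = X + A`, `ℓ₄ = 2X + B`, `ℓ₅ = 3X + C`. -/
noncomputable def tropTerm (A B C : ℝ) : Fin 5 → (ℝ × ℝ × ℝ) → ℝ :=
  ![fun p => p.2.2, fun p => p.2.1, fun p => p.1 + A,
    fun p => 2 * p.1 + B, fun p => 3 * p.1 + C]

/-- The nine cells `σ₁, …, σ₉` of the tropical hypersurface of the re-embedding polynomial. -/
noncomputable def sigmaCell (A B C : ℝ) : Fin 9 → Set (ℝ × ℝ × ℝ) :=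
  ![{p | p.2.2 = p.1 + A ∧ p.2.1 ≤ p.2.2 ∧ p.1 ≤ A - B},
    {p | p.2.2 = 2 * p.1 + B ∧ p.2.1 ≤ p.2.2 ∧ A - B ≤ p.1 ∧ p.1 ≤ B - C},
    {p | p.2.2 = 3 * p.1 + C ∧ p.2.1 ≤ p.2.2 ∧ B - C ≤ p.1},
    {p | p.1 = A - B ∧ p.2.2 ≤ 2 * A - B ∧ p.2.1 ≤ 2 * A - B},
    {p | p.1 = B - C ∧ p.2.2 ≤ 3 * B - 2 * C ∧ p.2.1 ≤ 3 * B - 2 * C},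
    {p | p.2.1 = p.1 + A ∧ p.2.2 ≤ p.2.1 ∧ p.1 ≤ A - B},
    {p | p.2.1 = 2 * p.1 + B ∧ p.2.2 ≤ p.2.1 ∧ A - B ≤ p.1 ∧ p.1 ≤ B - C},
    {p | p.2.1 = 3 * p.1 + C ∧ p.2.2 ≤ p.2.1 ∧ B - C ≤ p.1},
    {p | p.2.2 = p.2.1 ∧ p.1 + A ≤ p.2.2 ∧ 2 * p.1 + B ≤ p.2.2 ∧ 3 * p.1 + C ≤ p.2.2}]

/-! The five terms have maximum `max Z (max Y M)`, where `M = max (X + A) (max (2X + B) (3X + C))`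
is the tropical cubic. Peeling off `Z` and then `Y`, the maximum is attained twice exactly when
two of `Z`, `Y`, `M` tie at the top, or when `M` is itself attained twice and dominates `Y` and
`Z`. Because `A - B < B - C`, the cubic equals `X + A`, `2X + B`, `3X + C` on the three intervals
cut out by its breakpoints `A - B` and `B - C`, and is attained twice only at these breakpoints;
this splits the four possibilities into the nine cells. -/

open Finset Matrix

section MaxAttainedTwice

variable {α : Type*} [LinearOrder α]

def MaxAttainedTwice {ι : Type*} (f : ι → α) : Prop :=
  ∃ i j, i ≠ j ∧ (∀ k, f k ≤ f i) ∧ f j = f i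

theorem forall_le_iff_eq_sup' {ι : Type*} [Fintype ι] [Nonempty ι] (f : ι → α) (i : ι) :
    (∀ k, f k ≤ f i) ↔ f i = univ.sup' univ_nonempty f :=
  ⟨fun h => le_antisymm (le_sup' f (mem_univ i)) (sup'_le _ _ fun k _ => h k),
    fun h k => h ▸ le_sup' f (mem_univ k)⟩

theorem maxAttainedTwice_iff {ι : Type*} [Fintype ι] [Nonempty ι] (f : ι → α) :
    MaxAttainedTwice f ↔ ∃ i j, i ≠ j ∧ f i = univ.sup' univ_nonempty f ∧
      f j = univ.sup' univ_nonempty f := by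
  simp only [MaxAttainedTwice, forall_le_iff_eq_sup']
  exact exists₂_congr fun i j => and_congr_right' <| and_congr_right fun hi => hi ▸ Iff.rfl

theorem sup'_univ_vecCons {n : ℕ} (a : α) (f : Fin (n + 1) → α) :
    univ.sup' univ_nonempty (vecCons a f) = a ⊔ univ.sup' univ_nonempty f :=
  le_antisymm
    (sup'_le _ _ fun i _ =>
      Fin.cases le_sup_left (fun i => le_sup_of_le_right (le_sup' f (mem_univ i))) i)
    (sup_le (le_sup' (vecCons a f) (mem_univ 0))
      (sup'_le _ _ fun i _ => le_sup' (vecCons a f) (mem_univ i.succ)))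

theorem sup'_univ_vecCons_vecEmpty (a : α) : univ.sup' univ_nonempty ![a] = a :=
  le_antisymm (sup'_le _ _ fun i _ => by rw [Subsingleton.elim i 0]; rfl)
    (le_sup' ![a] (mem_univ 0))

theorem maxAttainedTwice_vecCons {n : ℕ} (a : α) (f : Fin (n + 1) → α) :
    MaxAttainedTwice (vecCons a f) ↔
      a = univ.sup' univ_nonempty f ∨ (a ≤ univ.sup' univ_nonempty f ∧ MaxAttainedTwice f) := by
  obtain ⟨k, -, hk⟩ := exists_mem_eq_sup' univ_nonempty f
  rw [maxAttainedTwice_iff, maxAttainedTwice_iff, sup'_univ_vecCons]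
  set M := univ.sup' univ_nonempty f
  have hfM (i) : f i ≤ M := le_sup' f (mem_univ i)
  constructor
  · rintro ⟨i, j, hij, hi, hj⟩
    cases i using Fin.cases with
    | zero =>
      cases j using Fin.cases with
      | zero => exact absurd rfl hij
      | succ j =>
        simp only [cons_val_zero, cons_val_succ] at hi hj
        exact Or.inl (le_antisymm (le_sup_left.trans (hj ▸ hfM j)) (sup_eq_left.mp hi.symm))
    | succ i =>
      cases j using Fin.cases with
      | zero =>
        simp only [cons_val_zero, cons_val_succ] at hi hj
        exact Or.inl (le_antisymm (le_sup_left.trans (hi ▸ hfM i)) (sup_eq_left.mp hj.symm))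
      | succ j =>
        simp only [cons_val_succ] at hi hj
        have haM : a ≤ M := le_sup_left.trans (hi ▸ hfM i)
        rw [max_eq_right haM] at hi hj
        exact Or.inr ⟨haM, i, j, fun h => hij (congrArg Fin.succ h), hi, hj⟩
  · rintro (haM | ⟨haM, i, j, hij, hi, hj⟩)
    · exact ⟨0, k.succ, (Fin.succ_ne_zero k).symm, by simp [haM], by simp [haM, hk]⟩
    · exact ⟨i.succ, j.succ, by simpa using hij, by simp [haM, hi], by simp [haM, hj]⟩

theorem not_maxAttainedTwice_of_subsingleton {ι : Type*} [Subsingleton ι] (f : ι → α) :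
    ¬ MaxAttainedTwice f :=
  fun ⟨i, j, hij, _⟩ => hij (Subsingleton.elim i j)

theorem maxAttainedTwice_pair (a b : α) : MaxAttainedTwice ![a, b] ↔ a = b := by
  rw [maxAttainedTwice_vecCons, sup'_univ_vecCons_vecEmpty,
    iff_false_intro (not_maxAttainedTwice_of_subsingleton (ι := Fin 1) _), and_false, or_false]

theorem maxAttainedTwice_vecCons_vecCons {n : ℕ} (a b : α) (f : Fin (n + 1) → α) :
    MaxAttainedTwice (vecCons a (vecCons b f)) ↔
      (a = univ.sup' univ_nonempty f ∧ b ≤ a) ∨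
        (a ≤ univ.sup' univ_nonempty f ∧ b ≤ univ.sup' univ_nonempty f ∧ MaxAttainedTwice f) ∨
          (b = univ.sup' univ_nonempty f ∧ a ≤ b) ∨ (a = b ∧ univ.sup' univ_nonempty f ≤ a) := by
  rw [maxAttainedTwice_vecCons, maxAttainedTwice_vecCons, sup'_univ_vecCons]
  grind

end MaxAttainedTwice

noncomputable def tropCubic (A B C X : ℝ) : ℝ := max (X + A) (max (2 * X + B) (3 * X + C))

theorem sup'_cubic_terms_eq_tropCubic (A B C X : ℝ) :
    univ.sup' univ_nonempty ![X + A, 2 * X + B, 3 * X + C] = tropCubic A B C X := by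
  rw [sup'_univ_vecCons, sup'_univ_vecCons, sup'_univ_vecCons_vecEmpty]; rfl

section Cubic

variable {A B C : ℝ}

theorem tropCubic_eq_of_le (hABC : A - B < B - C) {X : ℝ} (hX : X ≤ A - B) :
    tropCubic A B C X = X + A := by
  rw [tropCubic, max_eq_left (max_le (by linarith) (by linarith))]

theorem tropCubic_eq_of_mem_Icc {X : ℝ} (hX₁ : A - B ≤ X) (hX₂ : X ≤ B - C) :
    tropCubic A B C X = 2 * X + B := by
  rw [tropCubic, max_eq_left (by linarith : 3 * X + C ≤ 2 * X + B), max_eq_right (by linarith)]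

theorem tropCubic_eq_of_ge (hABC : A - B < B - C) {X : ℝ} (hX : B - C ≤ X) :
    tropCubic A B C X = 3 * X + C := by
  rw [tropCubic, max_eq_right (by linarith : 2 * X + B ≤ 3 * X + C), max_eq_right (by linarith)]

variable (hABC : A - B < B - C)
include hABC

theorem eq_tropCubic_iff (w X : ℝ) :
    w = tropCubic A B C X ↔ (w = X + A ∧ X ≤ A - B) ∨ (w = 2 * X + B ∧ A - B ≤ X ∧ X ≤ B - C) ∨
      (w = 3 * X + C ∧ B - C ≤ X) := by
  constructor
  · intro hw
    rcases le_total X (A - B) with h₁ | h₁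
    · exact Or.inl ⟨hw.trans (tropCubic_eq_of_le hABC h₁), h₁⟩
    rcases le_total X (B - C) with h₂ | h₂
    · exact Or.inr (Or.inl ⟨hw.trans (tropCubic_eq_of_mem_Icc h₁ h₂), h₁, h₂⟩)
    · exact Or.inr (Or.inr ⟨hw.trans (tropCubic_eq_of_ge hABC h₂), h₂⟩)
  · rintro (⟨rfl, h⟩ | ⟨rfl, h₁, h₂⟩ | ⟨rfl, h⟩)
    · exact (tropCubic_eq_of_le hABC h).symm
    · exact (tropCubic_eq_of_mem_Icc h₁ h₂).symm
    · exact (tropCubic_eq_of_ge hABC h).symm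

theorem eq_tropCubic_and_le_iff (w v X : ℝ) :
    (w = tropCubic A B C X ∧ v ≤ w) ↔ (w = X + A ∧ v ≤ w ∧ X ≤ A - B) ∨
      (w = 2 * X + B ∧ v ≤ w ∧ A - B ≤ X ∧ X ≤ B - C) ∨ (w = 3 * X + C ∧ v ≤ w ∧ B - C ≤ X) := by
  rw [eq_tropCubic_iff hABC]
  tauto

theorem maxAttainedTwice_cubic_terms_iff (X : ℝ) :
    MaxAttainedTwice ![X + A, 2 * X + B, 3 * X + C] ↔ X = A - B ∨ X = B - C := by
  rw [maxAttainedTwice_vecCons, maxAttainedTwice_pair, sup'_univ_vecCons,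
    sup'_univ_vecCons_vecEmpty]
  constructor
  · rintro (h | ⟨-, h⟩)
    · left
      rcases le_total (2 * X + B) (3 * X + C) with h' | h'
      · rw [max_eq_right h'] at h; linarith
      · rw [max_eq_left h'] at h; linarith
    · right; linarith
  · rintro (rfl | rfl)
    · left; rw [max_eq_left (by linarith)]; ring
    · right; constructor
      · exact le_max_of_le_left (by linarith)
      · ring

theorem le_tropCubic_and_maxAttainedTwice_iff (y z X : ℝ) :
    (z ≤ tropCubic A B C X ∧ y ≤ tropCubic A B C X ∧
        MaxAttainedTwice ![X + A, 2 * X + B, 3 * X + C]) ↔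
      (X = A - B ∧ z ≤ 2 * A - B ∧ y ≤ 2 * A - B) ∨
        (X = B - C ∧ z ≤ 3 * B - 2 * C ∧ y ≤ 3 * B - 2 * C) := by
  rw [maxAttainedTwice_cubic_terms_iff hABC]
  constructor
  · rintro ⟨hz, hy, rfl | rfl⟩
    · rw [tropCubic_eq_of_le hABC le_rfl] at hz hy
      exact Or.inl ⟨rfl, by linarith, by linarith⟩
    · rw [tropCubic_eq_of_ge hABC le_rfl] at hz hy
      exact Or.inr ⟨rfl, by linarith, by linarith⟩
  · rintro (⟨rfl, hz, hy⟩ | ⟨rfl, hz, hy⟩)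
    · rw [tropCubic_eq_of_le hABC le_rfl]
      exact ⟨by linarith, by linarith, Or.inl rfl⟩
    · rw [tropCubic_eq_of_ge hABC le_rfl]
      exact ⟨by linarith, by linarith, Or.inr rfl⟩

end Cubic

theorem tropTerm_apply (A B C X Y Z : ℝ) :
    (fun k => tropTerm A B C k (X, Y, Z)) = ![Z, Y, X + A, 2 * X + B, 3 * X + C] := by
  funext k
  fin_cases k <;> rfl

theorem mem_iUnion_sigmaCell (A B C X Y Z : ℝ) :
    (X, Y, Z) ∈ ⋃ i, sigmaCell A B C i ↔
      (Z = X + A ∧ Y ≤ Z ∧ X ≤ A - B) ∨ (Z = 2 * X + B ∧ Y ≤ Z ∧ A - B ≤ X ∧ X ≤ B - C) ∨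
      (Z = 3 * X + C ∧ Y ≤ Z ∧ B - C ≤ X) ∨ (X = A - B ∧ Z ≤ 2 * A - B ∧ Y ≤ 2 * A - B) ∨
      (X = B - C ∧ Z ≤ 3 * B - 2 * C ∧ Y ≤ 3 * B - 2 * C) ∨ (Y = X + A ∧ Z ≤ Y ∧ X ≤ A - B) ∨
      (Y = 2 * X + B ∧ Z ≤ Y ∧ A - B ≤ X ∧ X ≤ B - C) ∨ (Y = 3 * X + C ∧ Z ≤ Y ∧ B - C ≤ X) ∨
      (Z = Y ∧ X + A ≤ Z ∧ 2 * X + B ≤ Z ∧ 3 * X + C ≤ Z) := by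
  simp only [Set.mem_iUnion, Fin.exists_fin_succ, Fin.exists_fin_zero, or_false]
  rfl

/-- The tropical hypersurface of the re-embedding polynomial `z − (y − a₁x − a₂x² − a₃x³)`,
i.e. the locus where the maximum of the five tropical terms is attained at least twice,
is exactly the union of the nine cells `σ₁, …, σ₉`. -/
theorem tropical_hypersurface_eq_union_nine_cells (A B C : ℝ) (hABC : A - B < B - C) :
    {p : ℝ × ℝ × ℝ | ∃ i j : Fin 5, i ≠ j ∧
        (∀ k : Fin 5, tropTerm A B C k p ≤ tropTerm A B C i p) ∧
        tropTerm A B C j p = tropTerm A B C i p} =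
      ⋃ i : Fin 9, sigmaCell A B C i := by
  ext ⟨X, Y, Z⟩
  change MaxAttainedTwice (fun k => tropTerm A B C k (X, Y, Z)) ↔ _
  rw [tropTerm_apply, maxAttainedTwice_vecCons_vecCons, sup'_cubic_terms_eq_tropCubic,
    eq_tropCubic_and_le_iff hABC Z, le_tropCubic_and_maxAttainedTwice_iff hABC,
    eq_tropCubic_and_le_iff hABC Y, tropCubic, max_le_iff, max_le_iff, mem_iUnion_sigmaCell]
  simp only [or_assoc]
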